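/- arXiv:1908.10707 — 3 statements merged into one kernel-verified Lean document; each statement's English description precedes it below -/
import Mathlib

section
/- Let A be a unital ring, J ⊆ A a two-sided ideal, and let a, e₀ ∈ A satisfy 1 − e₀ a ∈ J and 1 − a e₀ ∈ J. Set s = 1 − e₀ a and e = (1 + s + s² + ⋯ + s^{N−1}) e₀. Then 1 − e a ∈ Jᴺ and 1 − a e ∈ Jᴺ. -/
/-! With `s = 1 - e₀ a` and `t = 1 - a e₀`, the telescoping geometric sum gives `1 - e a = s ^ N`,
and since `a s = t a` the same computation on the other side gives `1 - a e = t ^ N`. Both are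
`N`-th powers of elements of `J`. -/

open Finset

section GeomSum

variable {A : Type*} [Ring A]

theorem semiconjBy_one_sub_mul (x y : A) : SemiconjBy y (1 - x * y) (1 - y * x) := by
  simp only [SemiconjBy, mul_sub, sub_mul, mul_one, one_mul, mul_assoc]

theorem mul_geom_sum_one_sub_mul (x y : A) (n : ℕ) :
    y * ∑ i ∈ range n, (1 - x * y) ^ i = (∑ i ∈ range n, (1 - y * x) ^ i) * y := by
  rw [mul_sum, sum_mul]
  exact sum_congr rfl fun i _ => ((semiconjBy_one_sub_mul x y).pow_right i).eq

theorem one_sub_geom_sum_mul_mul (x y : A) (n : ℕ) :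
    1 - (∑ i ∈ range n, (1 - x * y) ^ i) * x * y = (1 - x * y) ^ n := by
  have h := geom_sum_mul_neg (1 - x * y) n
  rw [sub_sub_cancel] at h
  rw [mul_assoc, h, sub_sub_cancel]

theorem one_sub_mul_geom_sum_mul (x y : A) (n : ℕ) :
    1 - y * ((∑ i ∈ range n, (1 - x * y) ^ i) * x) = (1 - y * x) ^ n := by
  rw [← mul_assoc, mul_geom_sum_one_sub_mul, one_sub_geom_sum_mul_mul]

end GeomSum

theorem stmt4_general {A : Type*} [Ring A] (J : Submodule ℤ A)
    (a e₀ : A) (h₁ : 1 - e₀ * a ∈ J) (h₂ : 1 - a * e₀ ∈ J)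
    (N : ℕ)
    (s e : A) (hs : s = 1 - e₀ * a)
    (he : e = (∑ k ∈ Finset.range N, s ^ k) * e₀) :
    1 - e * a ∈ J ^ N ∧ 1 - a * e ∈ J ^ N := by
  subst hs he
  rw [one_sub_geom_sum_mul_mul, one_sub_mul_geom_sum_mul]
  exact ⟨Submodule.pow_mem_pow J h₁ N, Submodule.pow_mem_pow J h₂ N⟩

/-- Let `A` be a unital ring, `J ⊆ A` a two-sided ideal (encoded as a
`ℤ`-submodule closed under left and right multiplication), and let `a, e₀ ∈ A` satisfy
`1 − e₀ a ∈ J` and `1 − a e₀ ∈ J`. Set `s = 1 − e₀ a` and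
`e = (1 + s + s² + ⋯ + s^{N−1}) e₀`. Then `1 − e a ∈ Jᴺ` and `1 − a e ∈ Jᴺ`,
where `Jᴺ` is the (two-sided, since `J` is) ideal generated by `N`-fold products of
elements of `J`, i.e. the `N`-th power of the submodule `J`. -/
theorem stmt4 {A : Type*} [Ring A] (J : Submodule ℤ A)
    (hJl : ∀ x ∈ J, ∀ y : A, y * x ∈ J)
    (hJr : ∀ x ∈ J, ∀ y : A, x * y ∈ J)
    (a e₀ : A) (h₁ : 1 - e₀ * a ∈ J) (h₂ : 1 - a * e₀ ∈ J)
    (N : ℕ) (hN : 1 ≤ N)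
    (s e : A) (hs : s = 1 - e₀ * a)
    (he : e = (∑ k ∈ Finset.range N, s ^ k) * e₀) :
    1 - e * a ∈ J ^ N ∧ 1 - a * e ∈ J ^ N :=
  stmt4_general J a e₀ h₁ h₂ N s e hs he
end

section
/- Let H be a Hilbert space, D, E, E' ∈ L(H) such that 1 − ED, 1 − DE, 1 − E'D, 1 − DE' are all trace class. Then Tr(1 − ED) − Tr(1 − DE) = Tr(1 − E'D) − Tr(1 − DE'), i.e., the trace-defect index is independent of the choice of the almost-inverse. -/
noncomputable section

variable {ι H : Type*} [NormedAddCommGroup H] [InnerProductSpace ℂ H] [CompleteSpace H]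

/-- The trace of an operator computed along a Hilbert basis `e`:
`Tr T = Σ_i ⟨e_i, T e_i⟩`. For trace-class `T` this is basis-independent. -/
def trAlong (e : HilbertBasis ι ℂ H) (T : H →L[ℂ] H) : ℂ :=
  ∑' i, @inner ℂ H _ (e i) (T (e i))

/-- `T` is of trace class: it factors as a product of two Hilbert–Schmidt operators
(Hilbert–Schmidt being expressed via the Hilbert basis `e`; this is equivalent to the
usual definition and independent of the choice of basis). -/
def IsTraceClassAlong (e : HilbertBasis ι ℂ H) (T : H →L[ℂ] H) : Prop :=
  ∃ A B : H →L[ℂ] H, T = A * B ∧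
    Summable (fun i => ‖A (e i)‖ ^ 2) ∧ Summable (fun i => ‖B (e i)‖ ^ 2)

set_option linter.unusedSectionVars false

open ContinuousLinearMap

local notation "⟪" x ", " y "⟫" => @inner ℂ H _ x y

lemma reCLM_conj_mul (z : ℂ) : Complex.reCLM ((starRingEnd ℂ) z * z) = ‖z‖ ^ 2 := by
  rw [mul_comm, Complex.mul_conj]
  simp [Complex.normSq_eq_norm_sq, ← Complex.ofReal_pow]

lemma parseval (e : HilbertBasis ι ℂ H) (x : H) :
    HasSum (fun i => ‖⟪e i, x⟫‖ ^ 2) (‖x‖ ^ 2) := by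
  have h := (e.hasSum_inner_mul_inner x x).mapL Complex.reCLM
  have h2 : (fun i => Complex.reCLM (⟪x, e i⟫ * ⟪e i, x⟫)) = fun i => ‖⟪e i, x⟫‖ ^ 2 := by
    funext i
    rw [← inner_conj_symm x (e i), reCLM_conj_mul]
  have h3 : Complex.reCLM ⟪x, x⟫ = ‖x‖ ^ 2 := by
    have := inner_self_eq_norm_sq (𝕜 := ℂ) x
    simpa using this
  rwa [h2, h3] at h

/-- Summability of the matrix entries of a Hilbert–Schmidt operator, rows indexed by `p.1`. -/
lemma matrix_summable (e : HilbertBasis ι ℂ H) {A : H →L[ℂ] H}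
    (hA : Summable (fun i => ‖A (e i)‖ ^ 2)) :
    Summable (fun p : ι × ι => ‖⟪e p.2, A (e p.1)⟫‖ ^ 2) := by
  rw [summable_prod_of_nonneg (fun p => sq_nonneg _)]
  refine ⟨fun j => (parseval e (A (e j))).summable, ?_⟩
  convert hA using 1
  funext j
  exact (parseval e (A (e j))).tsum_eq

lemma hs_star (e : HilbertBasis ι ℂ H) {A : H →L[ℂ] H}
    (hA : Summable (fun i => ‖A (e i)‖ ^ 2)) :
    Summable (fun i => ‖(star A) (e i)‖ ^ 2) := by
  have key : (fun p : ι × ι => ‖⟪e p.2, A (e p.1)⟫‖ ^ 2)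
      = fun p : ι × ι => ‖⟪e p.1, (star A) (e p.2)⟫‖ ^ 2 := by
    funext p
    rw [star_eq_adjoint, adjoint_inner_right, ← inner_conj_symm (A (e p.1)) (e p.2),
      RCLike.norm_conj]
  have h := matrix_summable e hA
  rw [key] at h
  have h2 := ((Equiv.prodComm ι ι).summable_iff.mpr h)
  have h3 := (summable_prod_of_nonneg (f := fun p : ι × ι => ‖⟪e p.2, (star A) (e p.1)⟫‖ ^ 2)
    (fun p => sq_nonneg _)).mp (by simpa [Function.comp_def] using h2)
  refine h3.2.congr fun i => ?_
  exact (parseval e ((star A) (e i))).tsum_eq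

lemma hs_left (e : HilbertBasis ι ℂ H) (C : H →L[ℂ] H) {A : H →L[ℂ] H}
    (hA : Summable (fun i => ‖A (e i)‖ ^ 2)) :
    Summable (fun i => ‖(C * A) (e i)‖ ^ 2) := by
  refine Summable.of_nonneg_of_le (fun i => sq_nonneg _) (fun i => ?_) (hA.mul_left (‖C‖ ^ 2))
  have h1 : ‖C (A (e i))‖ ≤ ‖C‖ * ‖A (e i)‖ := C.le_opNorm _
  calc ‖(C * A) (e i)‖ ^ 2 = ‖C (A (e i))‖ ^ 2 := rfl
    _ ≤ (‖C‖ * ‖A (e i)‖) ^ 2 := by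
        apply pow_le_pow_left₀ (norm_nonneg _) h1
    _ = ‖C‖ ^ 2 * ‖A (e i)‖ ^ 2 := mul_pow _ _ 2

lemma hs_right (e : HilbertBasis ι ℂ H) {A : H →L[ℂ] H}
    (hA : Summable (fun i => ‖A (e i)‖ ^ 2)) (C : H →L[ℂ] H) :
    Summable (fun i => ‖(A * C) (e i)‖ ^ 2) := by
  have h := hs_star e (hs_left e (star C) (hs_star e hA))
  have : star (star C * star A) = A * C := by rw [star_mul, star_star, star_star]
  rwa [this] at h

lemma hasSum_fiber (e : HilbertBasis ι ℂ H) (A B : H →L[ℂ] H) (i : ι) :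
    HasSum (fun j => ⟪e i, A (e j)⟫ * ⟪e j, B (e i)⟫) ⟪e i, (A * B) (e i)⟫ := by
  have h := e.hasSum_inner_mul_inner ((adjoint A) (e i)) (B (e i))
  have h1 : (fun j => ⟪(adjoint A) (e i), e j⟫ * ⟪e j, B (e i)⟫)
      = fun j => ⟪e i, A (e j)⟫ * ⟪e j, B (e i)⟫ := by
    funext j; rw [adjoint_inner_left]
  have h2 : ⟪(adjoint A) (e i), B (e i)⟫ = ⟪e i, (A * B) (e i)⟫ := by
    rw [adjoint_inner_left]; rfl
  rwa [h1, h2] at h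

lemma g_summable (e : HilbertBasis ι ℂ H) {A B : H →L[ℂ] H}
    (hA : Summable (fun i => ‖A (e i)‖ ^ 2)) (hB : Summable (fun i => ‖B (e i)‖ ^ 2)) :
    Summable (fun p : ι × ι => ⟪e p.1, A (e p.2)⟫ * ⟪e p.2, B (e p.1)⟫) := by
  apply Summable.of_norm
  have hMA : Summable (fun p : ι × ι => ‖⟪e p.1, A (e p.2)⟫‖ ^ 2) := by
    have := (Equiv.prodComm ι ι).summable_iff.mpr (matrix_summable e hA)
    simpa [Function.comp_def] using this
  have hMB : Summable (fun p : ι × ι => ‖⟪e p.2, B (e p.1)⟫‖ ^ 2) := matrix_summable e hB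
  refine Summable.of_nonneg_of_le (fun p => norm_nonneg _) (fun p => ?_)
    ((hMA.add hMB).div_const 2)
  rw [norm_mul]
  set a := ‖⟪e p.1, A (e p.2)⟫‖
  set b := ‖⟪e p.2, B (e p.1)⟫‖
  have ha : 0 ≤ a := norm_nonneg _
  have hb : 0 ≤ b := norm_nonneg _
  nlinarith [sq_nonneg (a - b)]

lemma hasSum_diag (e : HilbertBasis ι ℂ H) {A B : H →L[ℂ] H}
    (hA : Summable (fun i => ‖A (e i)‖ ^ 2)) (hB : Summable (fun i => ‖B (e i)‖ ^ 2)) :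
    HasSum (fun i => ⟪e i, (A * B) (e i)⟫)
      (∑' p : ι × ι, ⟪e p.1, A (e p.2)⟫ * ⟪e p.2, B (e p.1)⟫) :=
  (g_summable e hA hB).hasSum.prod_fiberwise (fun i => hasSum_fiber e A B i)

lemma summable_diag (e : HilbertBasis ι ℂ H) {A B : H →L[ℂ] H}
    (hA : Summable (fun i => ‖A (e i)‖ ^ 2)) (hB : Summable (fun i => ‖B (e i)‖ ^ 2)) :
    Summable (fun i => ⟪e i, (A * B) (e i)⟫) :=
  (hasSum_diag e hA hB).summable

lemma trace_cyclic (e : HilbertBasis ι ℂ H) {A B : H →L[ℂ] H}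
    (hA : Summable (fun i => ‖A (e i)‖ ^ 2)) (hB : Summable (fun i => ‖B (e i)‖ ^ 2)) :
    trAlong e (A * B) = trAlong e (B * A) := by
  have h1 : trAlong e (A * B) = ∑' p : ι × ι, ⟪e p.1, A (e p.2)⟫ * ⟪e p.2, B (e p.1)⟫ :=
    (hasSum_diag e hA hB).tsum_eq
  have h2 : trAlong e (B * A) = ∑' p : ι × ι, ⟪e p.1, B (e p.2)⟫ * ⟪e p.2, A (e p.1)⟫ :=
    (hasSum_diag e hB hA).tsum_eq
  rw [h1, h2]
  rw [← (Equiv.prodComm ι ι).tsum_eq (fun p : ι × ι => ⟪e p.1, B (e p.2)⟫ * ⟪e p.2, A (e p.1)⟫)]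
  exact tsum_congr fun p => mul_comm _ _

lemma tc_summable (e : HilbertBasis ι ℂ H) {T : H →L[ℂ] H} (h : IsTraceClassAlong e T) :
    Summable (fun i => ⟪e i, T (e i)⟫) := by
  obtain ⟨A, B, rfl, hA, hB⟩ := h
  exact summable_diag e hA hB

lemma tc_mul_left (e : HilbertBasis ι ℂ H) {T : H →L[ℂ] H} (h : IsTraceClassAlong e T)
    (C : H →L[ℂ] H) : IsTraceClassAlong e (C * T) := by
  obtain ⟨A, B, rfl, hA, hB⟩ := h
  exact ⟨C * A, B, by rw [mul_assoc], hs_left e C hA, hB⟩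

lemma tc_mul_right (e : HilbertBasis ι ℂ H) {T : H →L[ℂ] H} (h : IsTraceClassAlong e T)
    (C : H →L[ℂ] H) : IsTraceClassAlong e (T * C) := by
  obtain ⟨A, B, rfl, hA, hB⟩ := h
  exact ⟨A, B * C, by rw [mul_assoc], hA, hs_right e hB C⟩

lemma tc_cyclic (e : HilbertBasis ι ℂ H) {T : H →L[ℂ] H} (h : IsTraceClassAlong e T)
    (C : H →L[ℂ] H) : trAlong e (T * C) = trAlong e (C * T) := by
  obtain ⟨A, B, rfl, hA, hB⟩ := h
  calc trAlong e (A * B * C) = trAlong e (A * (B * C)) := by rw [mul_assoc]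
    _ = trAlong e (B * C * A) := trace_cyclic e hA (hs_right e hB C)
    _ = trAlong e (B * (C * A)) := by rw [mul_assoc]
    _ = trAlong e (C * A * B) := trace_cyclic e hB (hs_left e C hA)
    _ = trAlong e (C * (A * B)) := by rw [mul_assoc]

lemma tr_sub (e : HilbertBasis ι ℂ H) {T S : H →L[ℂ] H}
    (hT : Summable (fun i => ⟪e i, T (e i)⟫)) (hS : Summable (fun i => ⟪e i, S (e i)⟫)) :
    trAlong e (T - S) = trAlong e T - trAlong e S := by
  unfold trAlong
  rw [← Summable.tsum_sub hT hS]
  exact tsum_congr fun i => by simp [inner_sub_right]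

/-- If `1 − ED`, `1 − DE`, `1 − E'D`, `1 − DE'` are all trace class,
then `Tr(1 − ED) − Tr(1 − DE) = Tr(1 − E'D) − Tr(1 − DE')`: the trace-defect index is
independent of the choice of the almost-inverse. -/
theorem stmt6 (e : HilbertBasis ι ℂ H) (D E E' : H →L[ℂ] H)
    (h₁ : IsTraceClassAlong e (1 - E * D)) (h₂ : IsTraceClassAlong e (1 - D * E))
    (h₃ : IsTraceClassAlong e (1 - E' * D)) (h₄ : IsTraceClassAlong e (1 - D * E')) :
    trAlong e (1 - E * D) - trAlong e (1 - D * E)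
      = trAlong e (1 - E' * D) - trAlong e (1 - D * E') := by
  set P := E' * (1 - D * E) with hP
  set Q := (1 - E' * D) * E with hQ
  have hPtc : IsTraceClassAlong e P := tc_mul_left e h₂ E'
  have hQtc : IsTraceClassAlong e Q := tc_mul_right e h₃ E
  -- trace equalities via cyclicity
  have key : trAlong e (P * D) - trAlong e (Q * D)
      = trAlong e (D * P) - trAlong e (D * Q) := by
    rw [tc_cyclic e hPtc D, tc_cyclic e hQtc D]
  -- identify differences of traces with traces of products
  have e1 : (1 - E * D) - (1 - E' * D) = P * D - Q * D := by rw [hP, hQ]; noncomm_ring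
  have e2 : (1 - D * E) - (1 - D * E') = D * P - D * Q := by rw [hP, hQ]; noncomm_ring
  have s1 := tc_summable e h₁
  have s2 := tc_summable e h₂
  have s3 := tc_summable e h₃
  have s4 := tc_summable e h₄
  have sPD := tc_summable e (tc_mul_right e hPtc D)
  have sQD := tc_summable e (tc_mul_right e hQtc D)
  have sDP := tc_summable e (tc_mul_left e hPtc D)
  have sDQ := tc_summable e (tc_mul_left e hQtc D)
  have l1 : trAlong e (1 - E * D) - trAlong e (1 - E' * D)
      = trAlong e (P * D) - trAlong e (Q * D) := by
    rw [← tr_sub e s1 s3, ← tr_sub e sPD sQD, e1]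
  have l2 : trAlong e (1 - D * E) - trAlong e (1 - D * E')
      = trAlong e (D * P) - trAlong e (D * Q) := by
    rw [← tr_sub e s2 s4, ← tr_sub e sDP sDQ, e2]
  have := l1.trans (key.trans l2.symm)
  linear_combination this


end
end

section
/- Let A be a unital ring, B ⊆ A a two-sided ideal, and τ : B → V a linear map into a vector space V that is a trace in the sense that τ(xy) = τ(yx) whenever x ∈ A, y ∈ B with xy, yx ∈ B. If a ∈ A and r, r' ∈ A both satisfy 1 − ra, 1 − ar, 1 − r'a, 1 − ar' ∈ B, then τ(1 − ra) − τ(1 − ar) = τ(1 − r'a) − τ(1 − ar'), i.e., the algebraically defined index τ[a,r] is independent of the choice of almost-inverse r. -/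
/-! Two almost-inverses `r, r'` of `a` differ by `d = r' - r = r'(1 - ar) - (1 - r'a)r ∈ B`.
Hence `(1 - ra) - (1 - r'a) = da` and `(1 - ar) - (1 - ar') = ad`, and the trace property
gives `τ(da) = τ(ad)`. -/

theorem sub_mem_of_almost_inverses {A S : Type*} [Ring A] [SetLike S A] [AddSubgroupClass S A]
    {B : S} (hBl : ∀ x : A, ∀ y ∈ B, x * y ∈ B) (hBr : ∀ x : A, ∀ y ∈ B, y * x ∈ B)
    {a r r' : A} (hr : 1 - a * r ∈ B) (hr' : 1 - r' * a ∈ B) : r' - r ∈ B := by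
  have hd : r' - r = r' * (1 - a * r) - (1 - r' * a) * r := by noncomm_ring
  rw [hd]
  exact sub_mem (hBl r' _ hr) (hBr r _ hr')

/-- Let `A` be a unital algebra over a field `k`, `B ⊆ A` a two-sided
ideal, and `τ : B → V` a linear map into a `k`-vector space that is a trace in the
sense that `τ(xy) = τ(yx)` whenever `x ∈ A`, `y ∈ B` (so that `xy, yx ∈ B`). If
`r, r'` are almost-inverses of `a` (`1 − ra, 1 − ar, 1 − r'a, 1 − ar' ∈ B`) then
`τ(1 − ra) − τ(1 − ar) = τ(1 − r'a) − τ(1 − ar')`: the algebraically defined index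
`τ[a,r]` does not depend on the choice of almost-inverse. -/
theorem stmt9 {k A V : Type*} [Field k] [Ring A] [Algebra k A]
    [AddCommGroup V] [Module k V]
    (B : Submodule k A)
    (hBl : ∀ x : A, ∀ y ∈ B, x * y ∈ B)
    (hBr : ∀ x : A, ∀ y ∈ B, y * x ∈ B)
    (τ : B →ₗ[k] V)
    (htrace : ∀ (x y : A) (hy : y ∈ B),
      τ ⟨x * y, hBl x y hy⟩ = τ ⟨y * x, hBr x y hy⟩)
    (a r r' : A)
    (h₁ : 1 - r * a ∈ B) (h₂ : 1 - a * r ∈ B)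
    (h₃ : 1 - r' * a ∈ B) (h₄ : 1 - a * r' ∈ B) :
    τ ⟨1 - r * a, h₁⟩ - τ ⟨1 - a * r, h₂⟩
      = τ ⟨1 - r' * a, h₃⟩ - τ ⟨1 - a * r', h₄⟩ := by
  have hd : r' - r ∈ B := sub_mem_of_almost_inverses hBl hBr h₂ h₃
  have hleft : (⟨1 - r * a, h₁⟩ : B) - ⟨1 - r' * a, h₃⟩ = ⟨(r' - r) * a, hBr a _ hd⟩ := by
    ext
    simp only [Submodule.coe_sub]
    noncomm_ring
  have hright : (⟨1 - a * r, h₂⟩ : B) - ⟨1 - a * r', h₄⟩ = ⟨a * (r' - r), hBl a _ hd⟩ := by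
    ext
    simp only [Submodule.coe_sub]
    noncomm_ring
  rw [sub_eq_sub_iff_sub_eq_sub, ← map_sub, ← map_sub, hleft, hright, htrace a (r' - r) hd]
end
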